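/- For all natural numbers k, l, the formal distributions J_k and J_l over the Weyl algebra of differential operators on ℂ[t,t⁻¹] are mutually local with locality order N = k + l + 1: for all integers m, n, both Σ_{s=0}^{N} (−1)^s · binom(N,s) · (m_{t^{m−s}} ∘ D^k) ∘ (m_{t^{n+s}} ∘ D^l) = 0 and Σ_{s=0}^{N} (−1)^s · binom(N,s) · (m_{t^{n+s}} ∘ D^l) ∘ (m_{t^{m−s}} ∘ D^k) = 0 hold in End_ℂ(ℂ[t,t⁻¹]). -/

import Mathlib

open LaurentPolynomial

noncomputable section

/-- `R = ℂ[t,t⁻¹]`, the algebra of complex Laurent polynomials. -/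
abbrev R := LaurentPolynomial ℂ

/-- Differentiation on Laurent polynomials, as a `ℂ`-linear endomorphism:
`Der (T n) = n • T (n-1)`, i.e. `Der f = f'`. -/
noncomputable def Der : Module.End ℂ R :=
  (Finsupp.lsum ℂ fun n : ℤ =>
    LinearMap.toSpanSingleton ℂ R ((n : ℂ) • LaurentPolynomial.T (n - 1)) :
      (ℤ →₀ ℂ) →ₗ[ℂ] R) ∘ₗ (AddMonoidAlgebra.coeffLinearEquiv ℂ : R ≃ₗ[ℂ] (ℤ →₀ ℂ)).toLinearMap

/-- Multiplication by `g ∈ R` as a `ℂ`-linear endomorphism `m_g`. -/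
noncomputable def mulE (g : R) : Module.End ℂ R := LinearMap.mulLeft ℂ g

/-! On the monomial `t^p` the operator `m_{t^a} ∘ D^k` acts as `p (p-1) ⋯ (p-k+1) · t^{a+p-k}`.
Hence both composites in the sum send `t^p` to `t^{m+n+p-k-l}` times a polynomial in `s` of
degree `k` (resp. `l`). The alternating binomial sum of order `N = k+l+1` is, up to sign, the
`N`-th forward difference at `0`, which annihilates every polynomial of degree `< N`. -/

namespace LaurentPolynomial

theorem linearMap_ext_T {S M : Type*} [CommSemiring S] [AddCommMonoid M] [Module S M]
    {f g : S[T;T⁻¹] →ₗ[S] M} (h : ∀ n, f (T n) = g (T n)) : f = g := by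
  refine LinearMap.ext fun p => ?_
  induction p using LaurentPolynomial.induction_on' with
  | add p q hp hq => rw [map_add, map_add, hp, hq]
  | C_mul_T n a => rw [← smul_eq_C_mul, map_smul, map_smul, h]

end LaurentPolynomial

open Polynomial in
theorem Polynomial.sum_range_neg_one_pow_mul_choose_mul_eval_eq_zero {S : Type*} [CommRing S]
    {P : S[X]} {N : ℕ} (hP : P.natDegree < N) :
    ∑ s ∈ Finset.range (N + 1), ((-1 : S) ^ s * N.choose s) * P.eval (s : S) = 0 := by
  have h := congr_fun (fwdDiff_iter_eq_zero_of_degree_lt hP) 0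
  rw [fwdDiff_iter_eq_sum_shift, Pi.zero_apply] at h
  calc _ = (-1) ^ N * ∑ s ∈ Finset.range (N + 1),
        ((-1 : ℤ) ^ (N - s) * N.choose s) • P.eval (0 + s • 1 : S) := by
        rw [Finset.mul_sum]
        refine Finset.sum_congr rfl fun s hs => ?_
        obtain ⟨j, rfl⟩ := Nat.exists_eq_add_of_le (Finset.mem_range_succ_iff.mp hs)
        simp only [Nat.add_sub_cancel_left, zsmul_eq_mul, nsmul_one, zero_add]
        push_cast
        rw [← mul_assoc, ← mul_assoc, ← pow_add, add_assoc, ← two_mul, pow_add, pow_mul, neg_one_sq,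
          one_pow, mul_one]
    _ = 0 := by rw [h, mul_zero]

theorem Der_apply_T (p : ℤ) : Der (T p) = (p : ℂ) • T (p - 1) := by
  change (Finsupp.lsum ℂ fun n : ℤ =>
    LinearMap.toSpanSingleton ℂ R ((n : ℂ) • T (n - 1))) (Finsupp.single p 1) = _
  rw [Finsupp.lsum_single, LinearMap.toSpanSingleton_apply, one_smul]

theorem Der_pow_apply_T (k : ℕ) (p : ℤ) :
    (Der ^ k) (T p) = (descPochhammer ℂ k).eval (p : ℂ) • T (p - k) := by
  induction k generalizing p with
  | zero => simp
  | succ k ih =>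
    rw [pow_succ', Module.End.mul_apply, ih, map_smul, Der_apply_T, smul_smul,
      descPochhammer_succ_eval]
    congr 2 <;> push_cast <;> ring

theorem mulE_T_mul_Der_pow_apply_T (a : ℤ) (k : ℕ) (p : ℤ) :
    (mulE (T a) * Der ^ k) (T p) = (descPochhammer ℂ k).eval (p : ℂ) • T (a + p - k) := by
  rw [Module.End.mul_apply, Der_pow_apply_T, map_smul, mulE, LinearMap.mulLeft_apply, ← T_add,
    add_sub_assoc]

theorem mulE_T_mul_Der_pow_mul_mulE_T_mul_Der_pow_apply_T (a b : ℤ) (k l : ℕ) (p : ℤ) :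
    ((mulE (T a) * Der ^ k) * (mulE (T b) * Der ^ l)) (T p) =
      ((descPochhammer ℂ l).eval (p : ℂ) * (descPochhammer ℂ k).eval ((b + p - l : ℤ) : ℂ)) •
        T (a + (b + p - l) - k) := by
  rw [Module.End.mul_apply, mulE_T_mul_Der_pow_apply_T, map_smul, mulE_T_mul_Der_pow_apply_T,
    smul_smul]

open Polynomial in
theorem LaurentPolynomial.sum_neg_one_pow_mul_choose_smul_eq_zero {S M : Type*} [CommRing S]
    [AddCommGroup M] [Module S M] {N : ℕ} (F : ℕ → S[T;T⁻¹] →ₗ[S] M)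
    (hF : ∀ p : ℤ, ∃ (v : M) (P : S[X]),
      P.natDegree < N ∧ ∀ s : ℕ, F s (T p) = P.eval (s : S) • v) :
    ∑ s ∈ Finset.range (N + 1), ((-1 : S) ^ s * N.choose s) • F s = 0 := by
  refine linearMap_ext_T fun p => ?_
  obtain ⟨v, P, hP, hFp⟩ := hF p
  simp only [LinearMap.sum_apply, LinearMap.smul_apply, hFp, smul_smul, ← Finset.sum_smul,
    Polynomial.sum_range_neg_one_pow_mul_choose_mul_eval_eq_zero hP, zero_smul,
    LinearMap.zero_apply]

open Polynomial in
theorem Polynomial.natDegree_C_mul_descPochhammer_comp_le {S : Type*} [CommRing S]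
    [NoZeroDivisors S] [Nontrivial S] (a : S) (k : ℕ) {q : S[X]} (hq : q.natDegree ≤ 1) :
    (C a * (descPochhammer S k).comp q).natDegree ≤ k :=
  (natDegree_C_mul_le _ _).trans <| natDegree_comp_le.trans <| by
    simpa using Nat.mul_le_mul_left k hq

open Polynomial in
/-- the formal distributions `J_k`, `J_l` over the Weyl algebra are
mutually local of order `N = k+l+1`:
`Σ_{s=0}^{N} (−1)^s (N choose s) (m_{t^{m−s}} D^k)(m_{t^{n+s}} D^l) = 0` and the
same with the two factors interchanged, for all `m n : ℤ`. -/
theorem stmt13 (k l : ℕ) (m n : ℤ) :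
    (∑ s ∈ Finset.range (k + l + 2), ((-1 : ℂ) ^ s * (Nat.choose (k + l + 1) s : ℂ)) •
        ((mulE (T (m - s)) * Der ^ k) * (mulE (T (n + s)) * Der ^ l)) = 0) ∧
    (∑ s ∈ Finset.range (k + l + 2), ((-1 : ℂ) ^ s * (Nat.choose (k + l + 1) s : ℂ)) •
        ((mulE (T (n + s)) * Der ^ l) * (mulE (T (m - s)) * Der ^ k)) = 0) := by
  constructor
  · refine LaurentPolynomial.sum_neg_one_pow_mul_choose_smul_eq_zero _ fun p =>
      ⟨T (m + n + p - l - k),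
      Polynomial.C ((descPochhammer ℂ l).eval (p : ℂ)) *
        (descPochhammer ℂ k).comp (X + Polynomial.C ((n + p - l : ℤ) : ℂ)),
      (natDegree_C_mul_descPochhammer_comp_le _ k (natDegree_X_add_C _).le).trans_lt (by omega),
      fun s => ?_⟩
    rw [mulE_T_mul_Der_pow_mul_mulE_T_mul_Der_pow_apply_T]
    simp only [eval_mul, Polynomial.eval_C, eval_comp, eval_add, eval_X]
    congr 3 <;> push_cast <;> ring
  · refine LaurentPolynomial.sum_neg_one_pow_mul_choose_smul_eq_zero _ fun p =>
      ⟨T (m + n + p - k - l),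
      Polynomial.C ((descPochhammer ℂ k).eval (p : ℂ)) *
        (descPochhammer ℂ l).comp (Polynomial.C ((m + p - k : ℤ) : ℂ) - X),
      (natDegree_C_mul_descPochhammer_comp_le _ l (by compute_degree)).trans_lt (by omega),
      fun s => ?_⟩
    rw [mulE_T_mul_Der_pow_mul_mulE_T_mul_Der_pow_apply_T]
    simp only [eval_mul, Polynomial.eval_C, eval_comp, eval_sub, eval_X]
    congr 3 <;> push_cast <;> ring

end
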